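/- arXiv:math/0409494 — 2 statements merged into one kernel-verified Lean document; each statement's English description precedes it below -/
import Mathlib

section
/- Let X be a closed subspace of a Hilbert space H and let Π be an orthogonal projection on H. Then the range of Π decomposes as the orthogonal direct sum Π H = clos(Π X) ⊕ (X^⊥ ∩ Π H). -/
/-!
For `v ∈ Π H` and `x ∈ X`, self-adjointness and `Π v = v` give `⟪Π x, v⟫ = ⟪x, v⟫`, so
`X^⊥ ∩ Π H = (clos(Π X))^⊥ ∩ Π H`. Since `clos(Π X)` is a closed subspace of the closed
subspace `Π H`, the claim is the orthogonal decomposition of `Π H` with respect to it.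
-/

open Submodule

namespace LinearMap

variable {𝕜 E : Type*} [RCLike 𝕜] [NormedAddCommGroup E] [InnerProductSpace 𝕜 E]

theorem IsSymmetric.orthogonal_map {T : E →ₗ[𝕜] E} (hT : T.IsSymmetric) (X : Submodule 𝕜 E) :
    (X.map T)ᗮ = Xᗮ.comap T := by
  ext v
  simp only [mem_orthogonal, mem_map, mem_comap, forall_exists_index, and_imp,
    forall_apply_eq_imp_iff₂, hT _ v]

theorem IsSymmetricProjection.orthogonal_inf_range {T : E →ₗ[𝕜] E}
    (hT : T.IsSymmetricProjection) (X : Submodule 𝕜 E) :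
    Xᗮ ⊓ range T = (X.map T)ᗮ ⊓ range T := by
  ext v
  simp only [mem_inf, hT.isSymmetric.orthogonal_map, mem_comap]
  exact and_congr_left fun hv => by rw [(IsIdempotentElem.mem_range_iff hT.isIdempotentElem).mp hv]

end LinearMap

theorem range_proj_decomp_general {H : Type*}
    [NormedAddCommGroup H] [InnerProductSpace ℂ H] [CompleteSpace H]
    (X : Submodule ℂ H)
    (P : H →L[ℂ] H) (hP : IsIdempotentElem P) (hPsa : IsSelfAdjoint P) :
    (∀ u ∈ (X.map (P : H →ₗ[ℂ] H)).topologicalClosure,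
        ∀ v ∈ Xᗮ ⊓ LinearMap.range (P : H →ₗ[ℂ] H), (inner ℂ u v : ℂ) = 0) ∧
    (X.map (P : H →ₗ[ℂ] H)).topologicalClosure ⊔ (Xᗮ ⊓ LinearMap.range (P : H →ₗ[ℂ] H))
      = LinearMap.range (P : H →ₗ[ℂ] H) := by
  have hPX : Xᗮ ⊓ LinearMap.range (P : H →ₗ[ℂ] H) =
      (X.map (P : H →ₗ[ℂ] H)).topologicalClosureᗮ ⊓ LinearMap.range (P : H →ₗ[ℂ] H) := by
    rw [orthogonal_closure]
    exact (ContinuousLinearMap.IsStarProjection.isSymmetricProjection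
      ⟨hP, hPsa⟩).orthogonal_inf_range X
  have hKP : (X.map (P : H →ₗ[ℂ] H)).topologicalClosure ≤ LinearMap.range (P : H →ₗ[ℂ] H) :=
    topologicalClosure_minimal _ LinearMap.map_le_range
      (ContinuousLinearMap.IsIdempotentElem.isClosed_range hP)
  rw [hPX]
  exact ⟨fun u hu v hv => inner_right_of_mem_orthogonal hu hv.1,
    sup_orthogonal_inf_of_hasOrthogonalProjection hKP⟩

/-- If `X` is a closed subspace of a Hilbert space `H` and `Π` is an orthogonal
projection on `H`, then `Π H = clos(Π X) ⊕ (X^⊥ ∩ Π H)` (orthogonal direct sum). -/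
theorem range_proj_decomp {H : Type*}
    [NormedAddCommGroup H] [InnerProductSpace ℂ H] [CompleteSpace H]
    (X : Submodule ℂ H) (hX : IsClosed (X : Set H))
    (P : H →L[ℂ] H) (hP : IsIdempotentElem P) (hPsa : IsSelfAdjoint P) :
    (∀ u ∈ (X.map (P : H →ₗ[ℂ] H)).topologicalClosure,
        ∀ v ∈ Xᗮ ⊓ LinearMap.range (P : H →ₗ[ℂ] H), (inner ℂ u v : ℂ) = 0) ∧
    (X.map (P : H →ₗ[ℂ] H)).topologicalClosure ⊔ (Xᗮ ⊓ LinearMap.range (P : H →ₗ[ℂ] H))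
      = LinearMap.range (P : H →ₗ[ℂ] H) :=
  range_proj_decomp_general X P hP hPsa
end

section
/- Green's formula on the disk: if u is a C² function on a neighborhood of the closed unit disk, then ∫_𝕋 u dm − u(0) = ∫_𝔻 Δ̃u dμ, where Δ̃ = (1/4)Δ, dm is normalized Lebesgue measure on 𝕋, and dμ = (2/π)log(1/|z|)dxdy. -/
/-!
In polar coordinates `z = r e^{iθ}` one has `r Δu = ∂_r (r ∂_r u) + r⁻¹ ∂_θ² u`. Against the
weight `log (1/r)`, the angular term integrates to zero over every circle, being the
`θ`-derivative of the periodic function `∂_θ u / r`. On every ray, `-log r · ∂_r (r ∂_r u)` is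
the derivative of `u - r log r · ∂_r u`, which runs from `u 0` at `r = 0` to `u (e^{iθ})` at
`r = 1`. Averaging over `θ` gives the formula.
-/

open MeasureTheory Set Complex
open scoped Real

/-- The (unnormalized) Laplacian of a real-valued function on `ℂ`. -/
noncomputable def lap (u : ℂ → ℝ) (z : ℂ) : ℝ :=
  fderiv ℝ (fun w => fderiv ℝ u w 1) z 1 +
    fderiv ℝ (fun w => fderiv ℝ u w Complex.I) z Complex.I

theorem MeasureTheory.IntegrableOn.comp_fst_prod {α β E : Type*} [MeasurableSpace α]
    [MeasurableSpace β] [NormedAddCommGroup E] {μ : Measure α} {ν : Measure β} [SFinite μ]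
    [SFinite ν] {g : α → E} {s : Set α} {t : Set β} (hg : IntegrableOn g s μ) (ht : ν t ≠ ⊤) :
    IntegrableOn (fun p : α × β => g p.1) (s ×ˢ t) (μ.prod ν) := by
  have : IsFiniteMeasure (ν.restrict t) := ⟨by simpa [lt_top_iff_ne_top] using ht⟩
  rw [IntegrableOn, ← Measure.prod_restrict]
  exact hg.comp_fst _

theorem integrableOn_neg_log_mul {h : ℝ × ℝ → ℝ} {a b : ℝ}
    (hh : ContinuousOn h (Icc 0 1 ×ˢ Icc a b)) :
    IntegrableOn (fun p => -Real.log p.1 * h p) (Ioo 0 1 ×ˢ Ioo a b) := by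
  have hlog : IntegrableOn (fun r => -Real.log r) (Ioo 0 1) :=
    ((intervalIntegrable_iff_integrableOn_Ioc_of_le zero_le_one).mp
      intervalIntegral.intervalIntegrable_log'.neg).mono_set Ioo_subset_Ioc_self
  rw [Measure.volume_eq_prod]
  exact (hlog.comp_fst_prod measure_Ioo_lt_top.ne).mul_continuousOn_of_subset hh
    (measurableSet_Ioo.prod measurableSet_Ioo) (isCompact_Icc.prod isCompact_Icc)
    (prod_mono Ioo_subset_Icc_self Ioo_subset_Icc_self)

theorem setIntegral_ball_eq_polar {E : Type*} [NormedAddCommGroup E] [NormedSpace ℝ E]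
    (f : ℂ → E) (R : ℝ) :
    ∫ z in Metric.ball (0 : ℂ) R, f z =
      ∫ p in Ioo 0 R ×ˢ Ioo (-π) π, p.1 • f (p.1 • exp (p.2 * I)) := by
  have hsub : Ioo 0 R ×ˢ Ioo (-π) π ⊆ polarCoord.target := by
    rw [polarCoord_target]; exact prod_mono Ioo_subset_Ioi_self subset_rfl
  have hpt : ∀ p ∈ polarCoord.target,
      p.1 • (Metric.ball (0 : ℂ) R).indicator f (Complex.polarCoord.symm p) =
        (Ioo 0 R ×ˢ Ioo (-π) π).indicator (fun p => p.1 • f (p.1 • exp (p.2 * I))) p := by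
    rintro ⟨r, θ⟩ ⟨hr, hθ⟩
    have hsymm : Complex.polarCoord.symm (r, θ) = r • exp (θ * I) := by
      rw [Complex.polarCoord_symm_apply, exp_mul_I, real_smul, ← ofReal_cos, ← ofReal_sin]
    have hmem : r • exp (θ * I) ∈ Metric.ball (0 : ℂ) R ↔ (r, θ) ∈ Ioo 0 R ×ˢ Ioo (-π) π := by
      simp [abs_of_pos (mem_Ioi.mp hr), hθ, mem_Ioi.mp hr]
    rw [hsymm]
    by_cases h : (r, θ) ∈ Ioo 0 R ×ˢ Ioo (-π) π
    · rw [indicator_of_mem (hmem.mpr h), indicator_of_mem h]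
    · rw [indicator_of_notMem (mt hmem.mp h), indicator_of_notMem h, smul_zero]
  rw [← integral_indicator measurableSet_ball, ← Complex.integral_comp_polarCoord_symm,
    setIntegral_congr_fun polarCoord.open_target.measurableSet hpt,
    setIntegral_indicator (measurableSet_Ioo.prod measurableSet_Ioo),
    inter_eq_self_of_subset_right hsub]

theorem bilinear_trace_rotation_invariant {F : Type*} [NormedAddCommGroup F] [NormedSpace ℝ F]
    (T : ℂ →L[ℝ] ℂ →L[ℝ] F) (θ : ℝ) :
    T (exp (θ * I)) (exp (θ * I)) + T (I * exp (θ * I)) (I * exp (θ * I)) = T 1 1 + T I I := by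
  have he : exp (θ * I) = Real.cos θ • (1 : ℂ) + Real.sin θ • I := by
    rw [exp_mul_I, ← ofReal_cos, ← ofReal_sin]; simp only [real_smul]; ring
  have hIe : I * exp (θ * I) = (-Real.sin θ) • (1 : ℂ) + Real.cos θ • I := by
    rw [exp_mul_I, ← ofReal_cos, ← ofReal_sin]; simp only [real_smul, ofReal_neg]
    linear_combination (Real.sin θ : ℂ) * I_mul_I
  rw [hIe, he]
  simp only [map_add, map_smul, add_apply, smul_apply]
  linear_combination (norm := module) (Real.sin_sq_add_cos_sq θ) • (T 1 1 + T I I)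

theorem integral_neg_log_mul_radial_deriv {E : Type*} [NormedAddCommGroup E] [NormedSpace ℝ E]
    {u : E → ℝ} {U : Set E} (hU : IsOpen U) (hu : ContDiffOn ℝ 2 u U) {v : E}
    (hv : ∀ r ∈ Icc (0 : ℝ) 1, r • v ∈ U) :
    ∫ r in (0 : ℝ)..1, -Real.log r *
        (fderiv ℝ u (r • v) v + r * fderiv ℝ (fderiv ℝ u) (r • v) v v) = u v - u 0 := by
  have hγ : ContinuousOn (fun r : ℝ => r • v) (Icc 0 1) := by fun_prop
  have hDu : ContinuousOn (fun r : ℝ => fderiv ℝ u (r • v) v) (Icc 0 1) :=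
    ((hu.continuousOn_fderiv_of_isOpen hU one_le_two).comp hγ hv).clm_apply continuousOn_const
  have hD2u : ContinuousOn (fun r : ℝ => fderiv ℝ (fderiv ℝ u) (r • v) v v) (Icc 0 1) :=
    ((((hu.fderiv_of_isOpen hU (m := 1) (by norm_num)).continuousOn_fderiv_of_isOpen hU
      le_rfl).comp hγ hv).clm_apply continuousOn_const).clm_apply continuousOn_const
  let Φ : ℝ → ℝ := fun r => Real.negMulLog r * fderiv ℝ u (r • v) v + u (r • v)
  have hΦ : ContinuousOn Φ (Icc 0 1) :=
    (Real.continuous_negMulLog.continuousOn.mul hDu).add (hu.continuousOn.comp hγ hv)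
  have hΦ' : ∀ r ∈ Ioo (0 : ℝ) 1, HasDerivAt Φ
      (-Real.log r * (fderiv ℝ u (r • v) v + r * fderiv ℝ (fderiv ℝ u) (r • v) v v)) r := by
    intro r hr
    have hrU : r • v ∈ U := hv r (Ioo_subset_Icc_self hr)
    have hline : HasDerivAt (fun s : ℝ => s • v) v r := by
      simpa using (hasDerivAt_id r).smul_const v
    have hu' : HasDerivAt (fun s : ℝ => u (s • v)) (fderiv ℝ u (r • v) v) r :=
      (((hu.contDiffAt (hU.mem_nhds hrU)).differentiableAt (by norm_num)).hasFDerivAt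
        ).comp_hasDerivAt r hline
    have hDu' : HasDerivAt (fun s : ℝ => fderiv ℝ u (s • v) v)
        (fderiv ℝ (fderiv ℝ u) (r • v) v v) r := by
      have h := (((hu.contDiffAt (hU.mem_nhds hrU)).fderiv_right (m := 1) le_rfl).differentiableAt
        one_ne_zero).hasFDerivAt.comp_hasDerivAt r hline
      simpa using h.clm_apply (hasDerivAt_const r v)
    refine ((Real.hasDerivAt_negMulLog hr.1.ne').mul hDu' |>.add hu').congr_deriv ?_
    simp only [Real.negMulLog]
    ring
  have hint : IntervalIntegrable (fun r => -Real.log r *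
      (fderiv ℝ u (r • v) v + r * fderiv ℝ (fderiv ℝ u) (r • v) v v)) volume 0 1 :=
    intervalIntegral.intervalIntegrable_log'.neg.mul_continuousOn (by
      rw [uIcc_of_le zero_le_one]; exact hDu.add (continuousOn_id.mul hD2u))
  rw [intervalIntegral.integral_eq_sub_of_hasDeriv_right_of_le zero_le_one hΦ
    (fun r hr => (hΦ' r hr).hasDerivWithinAt) hint]
  simp [Φ]

theorem smul_exp_mul_I_mem_closedBall {r : ℝ} (hr : r ∈ Icc 0 1) (θ : ℝ) :
    r • exp (θ * I) ∈ Metric.closedBall (0 : ℂ) 1 := by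
  simpa [norm_smul, abs_of_nonneg hr.1] using hr.2

theorem lap_eq_fderiv_fderiv {u : ℂ → ℝ} {z : ℂ} (hu : ContDiffAt ℝ 2 u z) :
    lap u z = fderiv ℝ (fderiv ℝ u) z 1 1 + fderiv ℝ (fderiv ℝ u) z I I := by
  have hDu : DifferentiableAt ℝ (fderiv ℝ u) z :=
    (hu.fderiv_right (m := 1) le_rfl).differentiableAt one_ne_zero
  rw [lap, fderiv_clm_apply hDu (differentiableAt_const _),
    fderiv_clm_apply hDu (differentiableAt_const _)]
  simp

/-- `∂_r (r ∂_r u)` at `z = r e^{iθ}`, in polar coordinates. -/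
noncomputable def radialLap (u : ℂ → ℝ) (r θ : ℝ) : ℝ :=
  fderiv ℝ u (r • exp (θ * I)) (exp (θ * I)) +
    r * fderiv ℝ (fderiv ℝ u) (r • exp (θ * I)) (exp (θ * I)) (exp (θ * I))

/-- `r⁻¹ ∂_θ² u` at `z = r e^{iθ}`, in polar coordinates. -/
noncomputable def angularLap (u : ℂ → ℝ) (r θ : ℝ) : ℝ :=
  r * fderiv ℝ (fderiv ℝ u) (r • exp (θ * I)) (I * exp (θ * I)) (I * exp (θ * I)) -
    fderiv ℝ u (r • exp (θ * I)) (exp (θ * I))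

section Polar

variable {u : ℂ → ℝ} {U : Set ℂ}

theorem radialLap_add_angularLap {r θ : ℝ} (hu : ContDiffAt ℝ 2 u (r • exp (θ * I))) :
    radialLap u r θ + angularLap u r θ = r * lap u (r • exp (θ * I)) := by
  rw [lap_eq_fderiv_fderiv hu,
    ← bilinear_trace_rotation_invariant (fderiv ℝ (fderiv ℝ u) (r • exp (θ * I))) θ,
    radialLap, angularLap]
  ring

theorem ContinuousOn.comp_smul_exp_mul_I {F : Type*} [TopologicalSpace F] {g : ℂ → F}
    (hg : ContinuousOn g U) :
    ContinuousOn (fun p : ℝ × ℝ => g (p.1 • exp (p.2 * I))) {p | p.1 • exp (p.2 * I) ∈ U} :=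
  hg.comp (by fun_prop) fun _ h => h

theorem continuousOn_radialLap (hU : IsOpen U) (hu : ContDiffOn ℝ 2 u U) :
    ContinuousOn (fun p : ℝ × ℝ => radialLap u p.1 p.2) {p | p.1 • exp (p.2 * I) ∈ U} := by
  have hDu := (hu.continuousOn_fderiv_of_isOpen hU one_le_two).comp_smul_exp_mul_I
  have hD2u := ((hu.fderiv_of_isOpen hU (m := 1) (by norm_num)).continuousOn_fderiv_of_isOpen hU
    le_rfl).comp_smul_exp_mul_I
  have he : ContinuousOn (fun p : ℝ × ℝ => exp (p.2 * I)) {p | p.1 • exp (p.2 * I) ∈ U} := by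
    fun_prop
  exact (hDu.clm_apply he).add (continuousOn_fst.mul ((hD2u.clm_apply he).clm_apply he))

theorem continuousOn_angularLap (hU : IsOpen U) (hu : ContDiffOn ℝ 2 u U) :
    ContinuousOn (fun p : ℝ × ℝ => angularLap u p.1 p.2) {p | p.1 • exp (p.2 * I) ∈ U} := by
  have hDu := (hu.continuousOn_fderiv_of_isOpen hU one_le_two).comp_smul_exp_mul_I
  have hD2u := ((hu.fderiv_of_isOpen hU (m := 1) (by norm_num)).continuousOn_fderiv_of_isOpen hU
    le_rfl).comp_smul_exp_mul_I
  have he : ContinuousOn (fun p : ℝ × ℝ => I * exp (p.2 * I)) {p | p.1 • exp (p.2 * I) ∈ U} := by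
    fun_prop
  exact (continuousOn_fst.mul ((hD2u.clm_apply he).clm_apply he)).sub
    (hDu.clm_apply (by fun_prop))

theorem hasDerivAt_fderiv_apply_I_mul_exp (hU : IsOpen U) (hu : ContDiffOn ℝ 2 u U) {r θ : ℝ}
    (hz : r • exp (θ * I) ∈ U) :
    HasDerivAt (fun t : ℝ => fderiv ℝ u (r • exp (t * I)) (I * exp (t * I)))
      (angularLap u r θ) θ := by
  have he : HasDerivAt (fun t : ℝ => exp (t * I)) (I * exp (θ * I)) θ := by
    simpa [mul_comm] using ((hasDerivAt_id (θ : ℂ)).mul_const I).cexp.comp_ofReal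
  have hz' : HasDerivAt (fun t : ℝ => r • exp (t * I)) (r • (I * exp (θ * I))) θ :=
    he.const_smul r
  have hIe : HasDerivAt (fun t : ℝ => I * exp (t * I)) (I * (I * exp (θ * I))) θ :=
    he.const_mul I
  have hD2u : HasFDerivAt (fderiv ℝ u) (fderiv ℝ (fderiv ℝ u) (r • exp (θ * I)))
      (r • exp (θ * I)) :=
    (((hu.contDiffAt (hU.mem_nhds hz)).fderiv_right (m := 1) le_rfl).differentiableAt
      one_ne_zero).hasFDerivAt
  have hDu : HasDerivAt (fun t : ℝ => fderiv ℝ u (r • exp (t * I)))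
      (fderiv ℝ (fderiv ℝ u) (r • exp (θ * I)) (r • (I * exp (θ * I)))) θ :=
    hD2u.comp_hasDerivAt θ hz'
  refine (hDu.clm_apply hIe).congr_deriv ?_
  rw [angularLap, ← mul_assoc, I_mul_I, neg_one_mul, map_neg, map_smul]
  simp only [smul_eq_mul, smul_apply]
  ring

theorem integral_angularLap_eq_zero (hU : IsOpen U) (hu : ContDiffOn ℝ 2 u U) {r : ℝ}
    (hr : ∀ θ : ℝ, r • exp (θ * I) ∈ U) :
    ∫ θ in (-π)..π, angularLap u r θ = 0 := by
  have hcont : Continuous (fun θ => angularLap u r θ) :=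
    continuousOn_univ.mp <| (continuousOn_angularLap hU hu).comp
      (Continuous.prodMk_right r).continuousOn fun θ _ => hr θ
  rw [intervalIntegral.integral_eq_sub_of_hasDerivAt
    (fun θ _ => hasDerivAt_fderiv_apply_I_mul_exp hU hu (hr θ)) (hcont.intervalIntegrable _ _)]
  have hπ : exp (π * I) = exp ((-π : ℝ) * I) := by
    rw [ofReal_neg, neg_mul, exp_pi_mul_I, exp_neg_pi_mul_I]
  rw [hπ, sub_self]

theorem integrableOn_neg_log_mul_radialLap (hU : IsOpen U) (hu : ContDiffOn ℝ 2 u U)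
    (hcl : Metric.closedBall (0 : ℂ) 1 ⊆ U) :
    IntegrableOn (fun p : ℝ × ℝ => -Real.log p.1 * radialLap u p.1 p.2)
      (Ioo 0 1 ×ˢ Ioo (-π) π) :=
  integrableOn_neg_log_mul <| (continuousOn_radialLap hU hu).mono
    fun p hp => hcl (smul_exp_mul_I_mem_closedBall hp.1 p.2)

theorem integrableOn_neg_log_mul_angularLap (hU : IsOpen U) (hu : ContDiffOn ℝ 2 u U)
    (hcl : Metric.closedBall (0 : ℂ) 1 ⊆ U) :
    IntegrableOn (fun p : ℝ × ℝ => -Real.log p.1 * angularLap u p.1 p.2)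
      (Ioo 0 1 ×ˢ Ioo (-π) π) :=
  integrableOn_neg_log_mul <| (continuousOn_angularLap hU hu).mono
    fun p hp => hcl (smul_exp_mul_I_mem_closedBall hp.1 p.2)

theorem setIntegral_neg_log_mul_radialLap (hU : IsOpen U) (hu : ContDiffOn ℝ 2 u U)
    (hcl : Metric.closedBall (0 : ℂ) 1 ⊆ U) :
    ∫ p in Ioo 0 1 ×ˢ Ioo (-π) π, -Real.log p.1 * radialLap u p.1 p.2 =
      ∫ θ in (-π)..π, (u (exp (θ * I)) - u 0) := by
  have hint := (integrableOn_neg_log_mul_radialLap hU hu hcl).swap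
  rw [Measure.volume_eq_prod, ← setIntegral_prod_swap]
  refine (setIntegral_prod _ hint).trans ?_
  rw [intervalIntegral.integral_of_le (by linarith [Real.pi_pos]), integral_Ioc_eq_integral_Ioo]
  refine setIntegral_congr_fun measurableSet_Ioo fun θ _ => ?_
  rw [← integral_Ioc_eq_integral_Ioo, ← intervalIntegral.integral_of_le zero_le_one]
  exact integral_neg_log_mul_radial_deriv hU hu fun r hr =>
    hcl (smul_exp_mul_I_mem_closedBall hr θ)

theorem setIntegral_neg_log_mul_angularLap (hU : IsOpen U) (hu : ContDiffOn ℝ 2 u U)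
    (hcl : Metric.closedBall (0 : ℂ) 1 ⊆ U) :
    ∫ p in Ioo 0 1 ×ˢ Ioo (-π) π, -Real.log p.1 * angularLap u p.1 p.2 = 0 := by
  have hint := integrableOn_neg_log_mul_angularLap hU hu hcl
  rw [Measure.volume_eq_prod] at hint ⊢
  rw [setIntegral_prod _ hint]
  refine (setIntegral_congr_fun measurableSet_Ioo fun r hr => ?_).trans (integral_zero _ _)
  dsimp only
  rw [integral_const_mul, ← integral_Ioc_eq_integral_Ioo,
    ← intervalIntegral.integral_of_le (by linarith [Real.pi_pos]),
    integral_angularLap_eq_zero hU hu fun θ =>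
      hcl (smul_exp_mul_I_mem_closedBall (Ioo_subset_Icc_self hr) θ), mul_zero]

end Polar

/-- Green's formula on the disk: for `u` of class `C²` on a neighborhood of the
closed unit disk, `∫_𝕋 u dm − u(0) = ∫_𝔻 Δ̃u dμ`, where `Δ̃ = (1/4)Δ` and
`dμ = (2/π)log(1/|z|)dxdy`. -/
theorem green_formula_disk (u : ℂ → ℝ) (U : Set ℂ) (hU : IsOpen U)
    (hcl : Metric.closedBall (0 : ℂ) 1 ⊆ U) (hu : ContDiffOn ℝ 2 u U) :
    (∫ θ in (0 : ℝ)..(2 * Real.pi), u (Complex.exp (θ * Complex.I))) / (2 * Real.pi)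
        - u 0
      = ∫ z in Metric.ball (0 : ℂ) 1,
          (1 / 4) * lap u z * (2 / Real.pi * Real.log (1 / ‖z‖)) := by
  have hperiodic : ∫ θ in (0 : ℝ)..2 * π, u (exp (θ * I)) = ∫ θ in (-π)..π, u (exp (θ * I)) := by
    have hper : Function.Periodic (fun θ : ℝ => u (exp (θ * I))) (2 * π) := fun θ => by
      simp [exp_mul_I_periodic θ]
    simpa [show -π + 2 * π = π by ring] using (hper.intervalIntegral_add_eq (-π) 0).symm
  have hcont : Continuous fun θ : ℝ => u (exp (θ * I)) :=
    continuousOn_univ.mp <| hu.continuousOn.comp (by fun_prop) fun θ _ => hcl (by simp)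
  calc _ = (2 * π)⁻¹ * ∫ θ in (-π)..π, (u (exp (θ * I)) - u 0) := by
        rw [hperiodic, intervalIntegral.integral_sub (hcont.intervalIntegrable _ _)
          intervalIntegrable_const, intervalIntegral.integral_const, smul_eq_mul]
        generalize ∫ θ in (-π)..π, u (exp (θ * I)) = A
        field_simp
        ring
    _ = ∫ p in Ioo 0 1 ×ˢ Ioo (-π) π,
          (2 * π)⁻¹ * (-Real.log p.1 * (radialLap u p.1 p.2 + angularLap u p.1 p.2)) := by
        simp_rw [integral_const_mul, mul_add]
        rw [integral_add (integrableOn_neg_log_mul_radialLap hU hu hcl)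
          (integrableOn_neg_log_mul_angularLap hU hu hcl),
          setIntegral_neg_log_mul_radialLap hU hu hcl, setIntegral_neg_log_mul_angularLap hU hu hcl,
          add_zero]
    _ = _ := by
        rw [setIntegral_ball_eq_polar]
        refine setIntegral_congr_fun (measurableSet_Ioo.prod measurableSet_Ioo) fun p hp => ?_
        have hz : p.1 • exp (p.2 * I) ∈ U :=
          hcl (smul_exp_mul_I_mem_closedBall (Ioo_subset_Icc_self hp.1) p.2)
        have hnorm : ‖p.1 • exp (p.2 * I)‖ = p.1 := by simp [abs_of_pos hp.1.1]
        rw [radialLap_add_angularLap (hu.contDiffAt (hU.mem_nhds hz)), smul_eq_mul, hnorm,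
          one_div p.1, Real.log_inv]
        ring
end
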